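/- HM–GM–AM operator inequality: for positive definite A, B and s ∈ [0,1], ((1−s)A^(-1) + sB^(-1))^(-1) ⪯ A#ₛB ⪯ (1−s)A + sB in the Loewner order. -/

import Mathlib

open scoped ComplexOrder

/-- Real power of a matrix via the continuous functional calculus (for Hermitian matrices). -/
noncomputable def mpow {d : ℕ} (A : Matrix (Fin d) (Fin d) ℂ) (s : ℝ) : Matrix (Fin d) (Fin d) ℂ :=
  cfc (fun x : ℝ => x ^ s) A

/-- The s-weighted geometric mean A #ₛ B = A^(1/2) (A^(-1/2) B A^(-1/2))^s A^(1/2). -/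
noncomputable def gm {d : ℕ} (s : ℝ) (A B : Matrix (Fin d) (Fin d) ℂ) : Matrix (Fin d) (Fin d) ℂ :=
  mpow A (1/2) * mpow (mpow A (-(1/2)) * B * mpow A (-(1/2))) s * mpow A (1/2)

/-!
Conjugating by `A ^ (1 / 2)` reduces both inequalities to the case `A = 1`, that is, to
`((1 - s) + s C⁻¹)⁻¹ ≤ C ^ s ≤ (1 - s) + s C` for the positive matrix `C = A^(-1/2) B A^(-1/2)`.
By the continuous functional calculus these follow from the scalar weighted AM–GM inequality
`x ^ s ≤ (1 - s) + s x`, applied to `x` and to `x⁻¹`.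
-/

open scoped MatrixOrder Ring

namespace Real

lemma rpow_le_one_sub_add_mul {x s : ℝ} (hx : 0 ≤ x) (hs₀ : 0 ≤ s) (hs₁ : s ≤ 1) :
    x ^ s ≤ 1 - s + s * x := by
  have h := rpow_one_add_le_one_add_mul_self (s := x - 1) (by linarith) hs₀ hs₁
  rw [add_sub_cancel] at h
  linarith

lemma inv_one_sub_add_mul_inv_le_rpow {x s : ℝ} (hx : 0 < x) (hs₀ : 0 ≤ s) (hs₁ : s ≤ 1) :
    (1 - s + s * x⁻¹)⁻¹ ≤ x ^ s := by
  have h := rpow_le_one_sub_add_mul (inv_pos.mpr hx).le hs₀ hs₁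
  have h' := inv_anti₀ (rpow_pos_of_pos (inv_pos.mpr hx) s) h
  rwa [inv_rpow hx.le, inv_inv] at h'

end Real

namespace CFC

variable {A : Type*} [Ring A] [StarRing A] [TopologicalSpace A] [Algebra ℝ A]
  [ContinuousFunctionalCalculus ℝ A IsSelfAdjoint]

lemma cfc_one_sub_add_mul (s : ℝ) (f : ℝ → ℝ) (a : A)
    (hf : ContinuousOn f (spectrum ℝ a) := by cfc_cont_tac) (ha : IsSelfAdjoint a := by cfc_tac) :
    cfc (fun x ↦ 1 - s + s * f x) a = (1 - s) • 1 + s • cfc f a := by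
  rw [cfc_const_add .., cfc_const_mul .., Algebra.algebraMap_eq_smul_one]

variable [PartialOrder A] [StarOrderedRing A] [NonnegSpectrumClass ℝ A] [IsSemitopologicalRing A]
  [T2Space A]

lemma rpow_le_one_sub_smul_add_smul {a : A} (ha : 0 ≤ a) {s : ℝ} (hs₀ : 0 ≤ s) (hs₁ : s ≤ 1) :
    a ^ s ≤ (1 - s) • 1 + s • a := by
  have haff := cfc_one_sub_add_mul s (fun x ↦ x) a
  rw [cfc_id' ℝ a] at haff
  rw [rpow_eq_cfc_real ha, ← haff]
  exact cfc_mono fun x hx ↦ Real.rpow_le_one_sub_add_mul (spectrum_nonneg_of_nonneg ha hx) hs₀ hs₁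

lemma inverse_one_sub_smul_add_smul_inverse_le_rpow {a : A} (ha : IsStrictlyPositive a) {s : ℝ}
    (hs₀ : 0 ≤ s) (hs₁ : s ≤ 1) :
    ((1 - s) • 1 + s • a⁻¹ʳ)⁻¹ʳ ≤ a ^ s := by
  have hspec : ∀ x ∈ spectrum ℝ a, 0 < x := fun x hx ↦ ha.spectrum_pos hx
  have hinv : ContinuousOn (fun x : ℝ ↦ x⁻¹) (spectrum ℝ a) :=
    continuousOn_inv₀.mono fun x hx ↦ (hspec x hx).ne'
  have hne : ∀ x ∈ spectrum ℝ a, 1 - s + s * x⁻¹ ≠ 0 := fun x hx ↦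
    ((Real.rpow_pos_of_pos (inv_pos.mpr (hspec x hx)) s).trans_le
      (Real.rpow_le_one_sub_add_mul (inv_pos.mpr (hspec x hx)).le hs₀ hs₁)).ne'
  have hcont : ContinuousOn (fun x : ℝ ↦ 1 - s + s * x⁻¹) (spectrum ℝ a) :=
    continuousOn_const.add (continuousOn_const.mul hinv)
  rw [← cfc_ringInverse_id (R := ℝ) a ha.isUnit, ← cfc_one_sub_add_mul s _ a hinv,
    ← cfc_inv _ a hne hcont, rpow_eq_cfc_real ha.nonneg]
  exact cfc_mono (fun x hx ↦ Real.inv_one_sub_add_mul_inv_le_rpow (hspec x hx) hs₀ hs₁)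
    (hcont.inv₀ hne) (continuousOn_id.rpow_const fun x hx ↦ .inl (hspec x hx).ne')

lemma conjSqrt_rpow_le_one_sub_smul_add_smul {c a : A} (hc : IsStrictlyPositive c) (ha : 0 ≤ a)
    {s : ℝ} (hs₀ : 0 ≤ s) (hs₁ : s ≤ 1) :
    conjSqrt c ((conjSqrt c⁻¹ʳ a) ^ s) ≤ (1 - s) • c + s • a := by
  have hC : 0 ≤ conjSqrt c⁻¹ʳ a := IsSelfAdjoint.conjugate_nonneg ha (by cfc_tac)
  calc conjSqrt c ((conjSqrt c⁻¹ʳ a) ^ s)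
      ≤ conjSqrt c ((1 - s) • 1 + s • conjSqrt c⁻¹ʳ a) :=
        conjSqrt_le_conjSqrt (rpow_le_one_sub_smul_add_smul hC hs₀ hs₁)
    _ = (1 - s) • c + s • a := by
        rw [map_add, map_smul, map_smul, conjSqrt_one c, conjSqrt_conjSqrt_ringInverse c a]

lemma inverse_one_sub_smul_add_smul_inverse_le_conjSqrt_rpow {c a : A}
    (hc : IsStrictlyPositive c) (ha : IsStrictlyPositive a) {s : ℝ} (hs₀ : 0 ≤ s) (hs₁ : s ≤ 1) :
    ((1 - s) • c⁻¹ʳ + s • a⁻¹ʳ)⁻¹ʳ ≤ conjSqrt c ((conjSqrt c⁻¹ʳ a) ^ s) := by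
  have hC : IsStrictlyPositive (conjSqrt c⁻¹ʳ a) :=
    (isStrictlyPositive_conjSqrt_iff _ _ hc.ringInverse).mpr ha
  have hsum : (1 - s) • c⁻¹ʳ + s • a⁻¹ʳ
      = conjSqrt c⁻¹ʳ ((1 - s) • 1 + s • (conjSqrt c⁻¹ʳ a)⁻¹ʳ) := by
    rw [map_add, map_smul, map_smul, conjSqrt_one c⁻¹ʳ hc.ringInverse.nonneg,
      ringInverse_conjSqrt c⁻¹ʳ a hc.ringInverse, Ring.inverse_inverse hc.isUnit,
      conjSqrt_ringInverse_conjSqrt c _ hc]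
  rw [hsum, ringInverse_conjSqrt _ _ hc.ringInverse, Ring.inverse_inverse hc.isUnit]
  exact conjSqrt_le_conjSqrt (inverse_one_sub_smul_add_smul_inverse_le_rpow hC hs₀ hs₁)

end CFC

open CFC

lemma mpow_eq_rpow {d : ℕ} {A : Matrix (Fin d) (Fin d) ℂ} (hA : 0 ≤ A) (s : ℝ) :
    mpow A s = A ^ s :=
  (rpow_eq_cfc_real hA).symm

lemma gm_eq_conjSqrt_rpow {d : ℕ} (s : ℝ) {A B : Matrix (Fin d) (Fin d) ℂ} (hA : A.PosDef)
    (hB : 0 ≤ B) : gm s A B = conjSqrt A ((conjSqrt A⁻¹ʳ B) ^ s) := by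
  have hA' := hA.isStrictlyPositive
  have hsqrt : mpow A (1 / 2) = sqrt A := by rw [mpow_eq_rpow hA'.nonneg, sqrt_eq_rpow]
  have hsqrt_inv : mpow A (-(1 / 2)) = sqrt A⁻¹ʳ := by
    rw [mpow_eq_rpow hA'.nonneg, sqrt_ringInverse, sqrt_eq_rpow, inverse_rpow A _ (by norm_num)]
  have hC : 0 ≤ conjSqrt A⁻¹ʳ B := IsSelfAdjoint.conjugate_nonneg hB (by cfc_tac)
  rw [gm, hsqrt, hsqrt_inv, ← mpow_eq_rpow hC, conjSqrt_apply, conjSqrt_apply]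

theorem gm_HM_GM_AM {d : ℕ} (A B : Matrix (Fin d) (Fin d) ℂ)
    (hA : A.PosDef) (hB : B.PosDef) (s : ℝ) (hs : s ∈ Set.Icc (0 : ℝ) 1) :
    (gm s A B - ((1 - s) • A⁻¹ + s • B⁻¹)⁻¹).PosSemidef ∧
    ((1 - s) • A + s • B - gm s A B).PosSemidef := by
  obtain ⟨hs₀, hs₁⟩ := hs
  simp only [gm_eq_conjSqrt_rpow s hA hB.posSemidef.nonneg, Matrix.nonsing_inv_eq_ringInverse,
    ← Matrix.le_iff]
  exact ⟨inverse_one_sub_smul_add_smul_inverse_le_conjSqrt_rpow hA.isStrictlyPositive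
      hB.isStrictlyPositive hs₀ hs₁,
    conjSqrt_rpow_le_one_sub_smul_add_smul hA.isStrictlyPositive hB.posSemidef.nonneg hs₀ hs₁⟩
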